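/- arXiv:2405.16140 — 8 statements merged into one kernel-verified Lean document; each statement's English description precedes it below -/
import Mathlib

section
/- Let Q ⊆ E = EuclideanSpace ℝ (Fin n) be a convex set, f : E → ℝ, and let (fd, ψ) be a (δ,L,q)-model of degree q of the convex function f on Q. Then for every ρ > 0 and all x, y ∈ Q it holds that 0 ≤ f(x) − (fd(y) + ψ(x,y)) ≤ ((L + q·ρ)/2)·‖x−y‖² + ((2−q)/2)·δ^{2/(2−q)}·ρ^{−q/(2−q)}. -/
open Real

/-- Weighted AM–GM with weights `q/2` and `(2 - q)/2`, applied to `ρ t²` and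
`δ^(2/(2-q)) ρ^(-q/(2-q))`. -/
theorem mul_rpow_le_mul_sq_add_rpow {t δ ρ q : ℝ} (ht : 0 ≤ t) (hδ : 0 ≤ δ) (hρ : 0 < ρ)
    (hq0 : 0 ≤ q) (hq2 : q < 2) :
    δ * t ^ q ≤ q * ρ / 2 * t ^ 2 + (2 - q) / 2 * δ ^ (2 / (2 - q)) * ρ ^ (-(q / (2 - q))) := by
  have h2q : (2 - q) ≠ 0 := by linarith
  have hρ_pow_nonneg : 0 ≤ ρ ^ (-(q / (2 - q))) := rpow_nonneg hρ.le _
  have amgm := geom_mean_le_arith_mean2_weighted (w₁ := q / 2) (w₂ := (2 - q) / 2)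
    (p₁ := ρ * t ^ 2) (p₂ := δ ^ (2 / (2 - q)) * ρ ^ (-(q / (2 - q))))
    (by linarith) (by linarith) (by positivity)
    (mul_nonneg (rpow_nonneg hδ _) hρ_pow_nonneg) (by ring)
  have hfirst : (ρ * t ^ 2) ^ (q / 2) = ρ ^ (q / 2) * t ^ q := by
    rw [mul_rpow hρ.le (by positivity), ← rpow_natCast, ← rpow_mul ht]
    congr 2
    push_cast
    ring
  have hsecond : (δ ^ (2 / (2 - q)) * ρ ^ (-(q / (2 - q)))) ^ ((2 - q) / 2)
      = δ * ρ ^ (-(q / 2)) := by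
    rw [mul_rpow (rpow_nonneg hδ _) hρ_pow_nonneg, ← rpow_mul hδ, ← rpow_mul hρ.le]
    field_simp
    rw [rpow_one]
  have hprod : ρ ^ (q / 2) * t ^ q * (δ * ρ ^ (-(q / 2))) = δ * t ^ q := by
    rw [rpow_neg hρ.le, mul_comm δ, ← mul_assoc, mul_right_comm _ (t ^ q),
      mul_inv_cancel₀ (rpow_pos_of_pos hρ _).ne', one_mul, mul_comm]
  rw [hfirst, hsecond, hprod] at amgm
  linarith

theorem stmt_1_general {n : ℕ} (Q : Set (EuclideanSpace ℝ (Fin n)))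
    (f fd : EuclideanSpace ℝ (Fin n) → ℝ)
    (ψ : EuclideanSpace ℝ (Fin n) → EuclideanSpace ℝ (Fin n) → ℝ)
    (δ L q : ℝ) (hδ : 0 ≤ δ) (hq0 : 0 ≤ q) (hq2 : q < 2)
    (hmodel_lb : ∀ x ∈ Q, ∀ y ∈ Q, 0 ≤ f x - (fd y + ψ x y))
    (hmodel_ub : ∀ x ∈ Q, ∀ y ∈ Q,
      f x - (fd y + ψ x y) ≤ L / 2 * ‖x - y‖ ^ 2 + δ * ‖x - y‖ ^ q) :
    ∀ ρ > (0 : ℝ), ∀ x ∈ Q, ∀ y ∈ Q,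
      0 ≤ f x - (fd y + ψ x y) ∧
      f x - (fd y + ψ x y) ≤ (L + q * ρ) / 2 * ‖x - y‖ ^ 2 +
        (2 - q) / 2 * δ ^ (2 / (2 - q)) * ρ ^ (-(q / (2 - q))) := by
  intro ρ hρ x hx y hy
  refine ⟨hmodel_lb x hx y hy, ?_⟩
  have young := mul_rpow_le_mul_sq_add_rpow (norm_nonneg (x - y)) hδ hρ hq0 hq2
  linarith [hmodel_ub x hx y hy]

/-- A `(δ, L, q)`-model of degree `q` of a convex function `f` on a convex set `Q`
is, for every `ρ > 0`, a `(δ̂, L̂)`-model with `L̂ = L + qρ` and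
`δ̂ = ((2 - q)/2) * δ^(2/(2-q)) * ρ^(-q/(2-q))`. -/
theorem stmt_1 {n : ℕ} (Q : Set (EuclideanSpace ℝ (Fin n)))
    (hQ : Convex ℝ Q)
    (f fd : EuclideanSpace ℝ (Fin n) → ℝ)
    (ψ : EuclideanSpace ℝ (Fin n) → EuclideanSpace ℝ (Fin n) → ℝ)
    (δ L q : ℝ) (hδ : 0 ≤ δ) (hL : 0 < L) (hq0 : 0 ≤ q) (hq2 : q < 2)
    (hf : ConvexOn ℝ Q f)
    (hmodel_lb : ∀ x ∈ Q, ∀ y ∈ Q, 0 ≤ f x - (fd y + ψ x y))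
    (hmodel_ub : ∀ x ∈ Q, ∀ y ∈ Q,
      f x - (fd y + ψ x y) ≤ L / 2 * ‖x - y‖ ^ 2 + δ * ‖x - y‖ ^ q)
    (hψconv : ∀ y ∈ Q, ConvexOn ℝ Q (fun x => ψ x y))
    (hψzero : ∀ x ∈ Q, ψ x x = 0) :
    ∀ ρ > (0 : ℝ), ∀ x ∈ Q, ∀ y ∈ Q,
      0 ≤ f x - (fd y + ψ x y) ∧
      f x - (fd y + ψ x y) ≤ (L + q * ρ) / 2 * ‖x - y‖ ^ 2 +
        (2 - q) / 2 * δ ^ (2 / (2 - q)) * ρ ^ (-(q / (2 - q))) :=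
  stmt_1_general Q f fd ψ δ L q hδ hq0 hq2 hmodel_lb hmodel_ub
end

section
/- Let E = EuclideanSpace ℝ (Fin n), let f : E → ℝ be differentiable with gradient ∇f that is L_f-Lipschitz on E (L_f > 0), let α ∈ (0,1), and let g̃ : E → E satisfy ‖g̃(y) − ∇f(y)‖ ≤ α·‖∇f(y)‖ for all y ∈ E. Then for all x, y ∈ E: f(x) − ( f(y) + ⟨g̃(y), x − y⟩ ) ≤ (L_f/2)·‖x−y‖² + (α/(1−α))·‖g̃(y)‖·‖x−y‖. In particular, ψ(x,y) = ⟨g̃(y), x−y⟩ is a (δ, L_f, 1)-model of f at y with δ = (α/(1−α))·‖g̃(y)‖. -/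
/-!
Along the segment `t ↦ y + t • (x - y)`, the gap between `f` and its quadratic upper model
`f y + t f'(y)(x - y) + L t² ‖x - y‖² / 2` has derivative
`(f'(y + t(x - y)) - f'(y))(x - y) - L t ‖x - y‖²`, which is nonpositive by the Lipschitz bound
on `f'`; this gives the descent inequality.
The relative error `‖g̃ - ∇f‖ ≤ α ‖∇f‖` with `α < 1` forces `(1 - α) ‖∇f‖ ≤ ‖g̃‖`, so replacing
`∇f y` by `g̃ y` in the linear term costs at most `α / (1 - α) ‖g̃ y‖ ‖x - y‖`.
-/

open scoped RealInnerProductSpace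

theorem le_add_fderiv_add_of_norm_fderiv_sub_le {E : Type*} [NormedAddCommGroup E]
    [NormedSpace ℝ E] {f : E → ℝ} {L : ℝ} (hf : Differentiable ℝ f) (x y : E)
    (hL : ∀ z, ‖fderiv ℝ f z - fderiv ℝ f y‖ ≤ L * ‖z - y‖) :
    f x ≤ f y + fderiv ℝ f y (x - y) + L / 2 * ‖x - y‖ ^ 2 := by
  set v := x - y
  let gap : ℝ → ℝ := fun t ↦ f (y + t • v) - t * fderiv ℝ f y v - L / 2 * t ^ 2 * ‖v‖ ^ 2
  have hgap : ∀ t, HasDerivAt gap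
      (fderiv ℝ f (y + t • v) v - fderiv ℝ f y v - L * t * ‖v‖ ^ 2) t := by
    intro t
    have hline : HasDerivAt (fun t : ℝ ↦ y + t • v) v t := by
      simpa using ((hasDerivAt_id t).smul_const v).const_add y
    have hsum := (((hf _).hasFDerivAt.comp_hasDerivAt t hline).sub
      ((hasDerivAt_id t).mul_const (fderiv ℝ f y v))).sub
      (((hasDerivAt_pow 2 t).const_mul (L / 2)).mul_const (‖v‖ ^ 2))
    exact hsum.congr_deriv (by push_cast; ring)
  have hanti : AntitoneOn gap (Set.Icc 0 1) := by
    refine antitoneOn_of_hasDerivWithinAt_nonpos (convex_Icc 0 1)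
      (fun t _ ↦ (hgap t).continuousAt.continuousWithinAt)
      (fun t _ ↦ (hgap t).hasDerivWithinAt) fun t ht ↦ ?_
    rw [interior_Icc] at ht
    have hsmul : ‖y + t • v - y‖ = t * ‖v‖ := by
      rw [add_sub_cancel_left, norm_smul, Real.norm_of_nonneg ht.1.le]
    suffices fderiv ℝ f (y + t • v) v - fderiv ℝ f y v ≤ L * t * ‖v‖ ^ 2 by linarith
    calc fderiv ℝ f (y + t • v) v - fderiv ℝ f y v
        = (fderiv ℝ f (y + t • v) - fderiv ℝ f y) v := rfl
      _ ≤ ‖fderiv ℝ f (y + t • v) - fderiv ℝ f y‖ * ‖v‖ :=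
        (Real.le_norm_self _).trans (ContinuousLinearMap.le_opNorm _ _)
      _ ≤ L * (t * ‖v‖) * ‖v‖ := by
        rw [← hsmul]; exact mul_le_mul_of_nonneg_right (hL _) (norm_nonneg _)
      _ = L * t * ‖v‖ ^ 2 := by ring
  have hgap01 := hanti (by simp) (by simp) zero_le_one
  simp only [gap, one_smul, zero_smul, add_zero, v, add_sub_cancel] at hgap01
  linarith

theorem norm_gradient_sub_gradient {F : Type*} [NormedAddCommGroup F] [InnerProductSpace ℝ F]
    [CompleteSpace F] (f : F → ℝ) (x y : F) :
    ‖gradient f x - gradient f y‖ = ‖fderiv ℝ f x - fderiv ℝ f y‖ := by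
  rw [gradient, gradient, ← map_sub, LinearIsometryEquiv.norm_map]

theorem le_add_inner_gradient_add_of_norm_gradient_sub_le {F : Type*} [NormedAddCommGroup F]
    [InnerProductSpace ℝ F] [CompleteSpace F] {f : F → ℝ} {L : ℝ} (hf : Differentiable ℝ f)
    (x y : F) (hL : ∀ z, ‖gradient f z - gradient f y‖ ≤ L * ‖z - y‖) :
    f x ≤ f y + ⟪gradient f y, x - y⟫ + L / 2 * ‖x - y‖ ^ 2 := by
  rw [inner_gradient_left]
  exact le_add_fderiv_add_of_norm_fderiv_sub_le hf x y fun z ↦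
    norm_gradient_sub_gradient f z y ▸ hL z

theorem norm_sub_le_div_one_sub_mul_norm {E : Type*} [SeminormedAddCommGroup E] {a b : E}
    {α : ℝ} (hα₀ : 0 ≤ α) (hα : α < 1) (h : ‖a - b‖ ≤ α * ‖b‖) :
    ‖a - b‖ ≤ α / (1 - α) * ‖a‖ := by
  have hb : ‖b‖ ≤ ‖a‖ + ‖a - b‖ := norm_le_norm_add_norm_sub a b
  rw [div_mul_eq_mul_div, le_div_iff₀ (sub_pos.2 hα)]
  nlinarith [mul_le_mul_of_nonneg_left hb hα₀]

theorem stmt_2_general {n : ℕ} (f : EuclideanSpace ℝ (Fin n) → ℝ) (Lf α : ℝ)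
    (hα0 : 0 < α) (hα1 : α < 1)
    (hdiff : Differentiable ℝ f)
    (hlip : ∀ x y : EuclideanSpace ℝ (Fin n),
      ‖gradient f x - gradient f y‖ ≤ Lf * ‖x - y‖)
    (gt : EuclideanSpace ℝ (Fin n) → EuclideanSpace ℝ (Fin n))
    (hrel : ∀ y : EuclideanSpace ℝ (Fin n), ‖gt y - gradient f y‖ ≤ α * ‖gradient f y‖) :
    ∀ x y : EuclideanSpace ℝ (Fin n),
      f x - (f y + ⟪gt y, x - y⟫) ≤
        Lf / 2 * ‖x - y‖ ^ 2 + α / (1 - α) * ‖gt y‖ * ‖x - y‖ := by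
  intro x y
  have hdescent := le_add_inner_gradient_add_of_norm_gradient_sub_le hdiff x y fun z ↦ hlip z y
  have hgt : ‖gradient f y - gt y‖ ≤ α / (1 - α) * ‖gt y‖ := by
    rw [norm_sub_rev]
    exact norm_sub_le_div_one_sub_mul_norm hα0.le hα1 (hrel y)
  have herror : ⟪gradient f y - gt y, x - y⟫ ≤ α / (1 - α) * ‖gt y‖ * ‖x - y‖ :=
    (real_inner_le_norm _ _).trans (mul_le_mul_of_nonneg_right hgt (norm_nonneg _))
  rw [inner_sub_left] at herror
  linarith

/-- Relative inexactness of the gradient: if `‖g̃ y - ∇f y‖ ≤ α ‖∇f y‖` for all `y`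
and `∇f` is `L_f`-Lipschitz, then `ψ(x,y) = ⟪g̃ y, x - y⟫` is a
`(α/(1-α) * ‖g̃ y‖, L_f, 1)`-model of `f` at `y`. -/
theorem stmt_2 {n : ℕ} (f : EuclideanSpace ℝ (Fin n) → ℝ) (Lf α : ℝ)
    (hLf : 0 < Lf) (hα0 : 0 < α) (hα1 : α < 1)
    (hdiff : Differentiable ℝ f)
    (hlip : ∀ x y : EuclideanSpace ℝ (Fin n),
      ‖gradient f x - gradient f y‖ ≤ Lf * ‖x - y‖)
    (gt : EuclideanSpace ℝ (Fin n) → EuclideanSpace ℝ (Fin n))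
    (hrel : ∀ y : EuclideanSpace ℝ (Fin n), ‖gt y - gradient f y‖ ≤ α * ‖gradient f y‖) :
    ∀ x y : EuclideanSpace ℝ (Fin n),
      f x - (f y + ⟪gt y, x - y⟫) ≤
        Lf / 2 * ‖x - y‖ ^ 2 + α / (1 - α) * ‖gt y‖ * ‖x - y‖ :=
  stmt_2_general f Lf α hα0 hα1 hdiff hlip gt hrel
end

section
/- Let E = EuclideanSpace ℝ (Fin n), let f : E → ℝ be differentiable with gradient ∇f that is L_f-Lipschitz on E (L_f > 0), and let y, ŷ ∈ E with ‖y − ŷ‖ ≤ Δ for some Δ > 0. Then for all x ∈ E: f(x) − ( f(y) + ⟨∇f(ŷ), x − y⟩ ) ≤ (L_f/2)·‖x−y‖² + Δ·L_f·‖x−y‖. In particular, ψ(x,y) = ⟨∇f(ŷ), x−y⟩ is a (Δ·L_f, L_f, 1)-model of f at y. -/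
/-!
The descent lemma bounds `f x` by the linearization at `y` plus `L_f/2 * ‖x - y‖²`; replacing
`∇f y` by `∇f ŷ` costs `⟪∇f y - ∇f ŷ, x - y⟫ ≤ L_f * ‖y - ŷ‖ * ‖x - y‖` by Cauchy–Schwarz. The descent
lemma itself follows by restricting to the segment from `y` to `x`, where
`t ↦ f (y + t • (x - y)) - t * ⟪∇f y, x - y⟫ - L_f/2 * t² * ‖x - y‖²` has nonpositive derivative.
-/

open scoped RealInnerProductSpace

section

variable {E : Type*} [NormedAddCommGroup E] [InnerProductSpace ℝ E] [CompleteSpace E]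
  {f : E → ℝ}

theorem Differentiable.hasDerivAt_comp_add_smul (hf : Differentiable ℝ f) (y v : E) (t : ℝ) :
    HasDerivAt (fun s : ℝ => f (y + s • v)) ⟪gradient f (y + t • v), v⟫ t := by
  have hline : HasDerivAt (fun s : ℝ => y + s • v) v t := by
    simpa using ((hasDerivAt_id t).smul_const v).const_add y
  have h := (hf _).hasGradientAt.hasFDerivAt.comp_hasDerivAt t hline
  rwa [InnerProductSpace.toDual_apply_apply] at h

theorem Differentiable.le_add_inner_gradient_add_sq {L : ℝ} (hf : Differentiable ℝ f)
    (hlip : ∀ x y : E, ‖gradient f x - gradient f y‖ ≤ L * ‖x - y‖) (x y : E) :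
    f x ≤ f y + ⟪gradient f y, x - y⟫ + L / 2 * ‖x - y‖ ^ 2 := by
  set v := x - y
  let φ : ℝ → ℝ := fun t => f (y + t • v) - t * ⟪gradient f y, v⟫ - L / 2 * t ^ 2 * ‖v‖ ^ 2
  have hφ : ∀ t, HasDerivAt φ
      (⟪gradient f (y + t • v) - gradient f y, v⟫ - L * t * ‖v‖ ^ 2) t := by
    intro t
    have := ((hf.hasDerivAt_comp_add_smul y v t).sub ((hasDerivAt_id t).mul_const
      ⟪gradient f y, v⟫)).sub (((hasDerivAt_pow 2 t).const_mul (L / 2)).mul_const (‖v‖ ^ 2))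
    exact this.congr_deriv (by rw [inner_sub_left]; ring)
  have hφ'_nonpos : ∀ t ∈ Set.Ioo (0 : ℝ) 1,
      ⟪gradient f (y + t • v) - gradient f y, v⟫ - L * t * ‖v‖ ^ 2 ≤ 0 := by
    rintro t ⟨ht, -⟩
    have : ⟪gradient f (y + t • v) - gradient f y, v⟫ ≤ L * t * ‖v‖ ^ 2 :=
      calc ⟪gradient f (y + t • v) - gradient f y, v⟫
          ≤ ‖gradient f (y + t • v) - gradient f y‖ * ‖v‖ := real_inner_le_norm _ _
        _ ≤ L * ‖(y + t • v) - y‖ * ‖v‖ := by gcongr; exact hlip _ _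
        _ = L * t * ‖v‖ ^ 2 := by
          rw [add_sub_cancel_left, norm_smul, Real.norm_of_nonneg ht.le]; ring
    linarith
  have hanti : AntitoneOn φ (Set.Icc 0 1) :=
    antitoneOn_of_hasDerivWithinAt_nonpos (convex_Icc 0 1)
      (fun t _ => (hφ t).continuousAt.continuousWithinAt)
      (fun t _ => (hφ t).hasDerivWithinAt) (by simpa using hφ'_nonpos)
  have := hanti (by simp) (by simp) zero_le_one
  simp only [φ, one_smul, zero_smul, add_zero, show y + v = x from add_sub_cancel y x] at this
  linarith

end

theorem stmt_4_general {n : ℕ} (f : EuclideanSpace ℝ (Fin n) → ℝ) (Lf Δ : ℝ)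
    (hLf : 0 < Lf)
    (hdiff : Differentiable ℝ f)
    (hlip : ∀ x y : EuclideanSpace ℝ (Fin n),
      ‖gradient f x - gradient f y‖ ≤ Lf * ‖x - y‖)
    (y yhat : EuclideanSpace ℝ (Fin n)) (hshift : ‖y - yhat‖ ≤ Δ) :
    ∀ x : EuclideanSpace ℝ (Fin n),
      f x - (f y + ⟪gradient f yhat, x - y⟫) ≤
        Lf / 2 * ‖x - y‖ ^ 2 + Δ * Lf * ‖x - y‖ := by
  intro x
  have hdescent := hdiff.le_add_inner_gradient_add_sq hlip x y
  have hshift_cost : ⟪gradient f y - gradient f yhat, x - y⟫ ≤ Δ * Lf * ‖x - y‖ :=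
    calc ⟪gradient f y - gradient f yhat, x - y⟫
        ≤ ‖gradient f y - gradient f yhat‖ * ‖x - y‖ := real_inner_le_norm _ _
      _ ≤ Lf * ‖y - yhat‖ * ‖x - y‖ := by gcongr; exact hlip y yhat
      _ ≤ Lf * Δ * ‖x - y‖ := by gcongr
      _ = Δ * Lf * ‖x - y‖ := by ring
  rw [inner_sub_left] at hshift_cost
  linarith

/-- Computations at shifted points: if `∇f` is `L_f`-Lipschitz and `‖y - ŷ‖ ≤ Δ`, then
`ψ(x,y) = ⟪∇f ŷ, x - y⟫` is a `(Δ * L_f, L_f, 1)`-model of `f` at `y`. -/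
theorem stmt_4 {n : ℕ} (f : EuclideanSpace ℝ (Fin n) → ℝ) (Lf Δ : ℝ)
    (hLf : 0 < Lf) (hΔ : 0 < Δ)
    (hdiff : Differentiable ℝ f)
    (hlip : ∀ x y : EuclideanSpace ℝ (Fin n),
      ‖gradient f x - gradient f y‖ ≤ Lf * ‖x - y‖)
    (y yhat : EuclideanSpace ℝ (Fin n)) (hshift : ‖y - yhat‖ ≤ Δ) :
    ∀ x : EuclideanSpace ℝ (Fin n),
      f x - (f y + ⟪gradient f yhat, x - y⟫) ≤
        Lf / 2 * ‖x - y‖ ^ 2 + Δ * Lf * ‖x - y‖ :=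
  stmt_4_general f Lf Δ hLf hdiff hlip y yhat hshift
end

section
/- Let L > 0, R > 0, δ ≥ 0, q ∈ [0,2), N a positive integer, and F a real number. If F ≤ 2LR²/N + 2qρR²/N + (2−q)·δ^{2/(2−q)}·ρ^{−q/(2−q)} holds for every ρ > 0, then F ≤ 2LR²/N + 2(√2·R)^q·δ/N^{q/2}. -/
/-!
Writing `c = 2R²/N`, the hypothesis bounds `F - 2LR²/N` by `φ(ρ) = qcρ + (2-q) δ^{2/(2-q)} ρ^{-q/(2-q)}`
for every `ρ > 0`. For `δ > 0` it suffices to evaluate at the minimiser `ρ = c^{(q-2)/2} δ`, where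
`cρ = c^{q/2} δ` and `δ^{2/(2-q)} ρ^{-q/(2-q)} = c^{q/2} δ`, so `φ(ρ) = 2 c^{q/2} δ`; for `δ = 0`,
`φ(ρ) = qcρ` and one lets `ρ → 0⁺`.
-/

open Filter Topology

lemma le_of_forall_pos_le_add_mul {F B k : ℝ} (h : ∀ ρ > 0, F ≤ B + k * ρ) : F ≤ B := by
  have hlim : Tendsto (fun ρ : ℝ => B + k * ρ) (𝓝[>] 0) (𝓝 B) := by
    have : Continuous fun ρ : ℝ => B + k * ρ := by fun_prop
    simpa using (this.tendsto 0).mono_left nhdsWithin_le_nhds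
  exact ge_of_tendsto hlim (eventually_nhdsWithin_of_forall h)

lemma mul_add_rpow_neg_at_optimum {q c d : ℝ} (hq2 : q < 2) (hc : 0 < c) (hd : 0 < d) :
    q * c * (c ^ ((q - 2) / 2) * d)
        + (2 - q) * d ^ (2 / (2 - q)) * (c ^ ((q - 2) / 2) * d) ^ (-(q / (2 - q)))
      = 2 * c ^ (q / 2) * d := by
  have hs : 2 - q ≠ 0 := by linarith
  have hcρ : c * c ^ ((q - 2) / 2) = c ^ (q / 2) := by
    rw [mul_comm, ← Real.rpow_add_one hc.ne']
    congr 1; ring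
  have hρ : (c ^ ((q - 2) / 2) * d) ^ (-(q / (2 - q))) = c ^ (q / 2) * d ^ (-(q / (2 - q))) := by
    rw [Real.mul_rpow (by positivity) hd.le, ← Real.rpow_mul hc.le]
    congr 2; field_simp; ring
  have hd1 : d ^ (2 / (2 - q)) * d ^ (-(q / (2 - q))) = d := by
    rw [← Real.rpow_add hd]
    convert Real.rpow_one d using 2
    field_simp; ring
  calc q * c * (c ^ ((q - 2) / 2) * d)
        + (2 - q) * d ^ (2 / (2 - q)) * (c ^ ((q - 2) / 2) * d) ^ (-(q / (2 - q)))
      = q * (c * c ^ ((q - 2) / 2)) * d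
        + (2 - q) * c ^ (q / 2) * (d ^ (2 / (2 - q)) * d ^ (-(q / (2 - q)))) := by
        rw [hρ]; ring
    _ = 2 * c ^ (q / 2) * d := by rw [hcρ, hd1]; ring

lemma le_add_two_mul_rpow_mul_of_forall_pos {q c d B F : ℝ} (hq2 : q < 2) (hc : 0 < c)
    (hd : 0 ≤ d)
    (h : ∀ ρ > 0, F ≤ B + q * c * ρ + (2 - q) * d ^ (2 / (2 - q)) * ρ ^ (-(q / (2 - q)))) :
    F ≤ B + 2 * c ^ (q / 2) * d := by
  rcases hd.eq_or_lt with rfl | hd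
  · have hexp : (2 : ℝ) / (2 - q) ≠ 0 := div_ne_zero two_ne_zero (by linarith)
    refine (le_of_forall_pos_le_add_mul (k := q * c) fun ρ hρ => ?_).trans_eq (by ring)
    simpa [Real.zero_rpow hexp] using h ρ hρ
  · have := h _ (by positivity : 0 < c ^ ((q - 2) / 2) * d)
    rwa [add_assoc, mul_add_rpow_neg_at_optimum hq2 hc hd] at this

theorem stmt_8_general (L R δ q F : ℝ) (N : ℕ) (hR : 0 < R) (hδ : 0 ≤ δ)
    (hq2 : q < 2) (hN : 0 < N)
    (h : ∀ ρ > (0 : ℝ),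
      F ≤ 2 * L * R ^ 2 / N + 2 * q * ρ * R ^ 2 / N +
        (2 - q) * δ ^ (2 / (2 - q)) * ρ ^ (-(q / (2 - q)))) :
    F ≤ 2 * L * R ^ 2 / N + 2 * (Real.sqrt 2 * R) ^ q * δ / (N : ℝ) ^ (q / 2) := by
  have hc : 0 < 2 * R ^ 2 / N := by positivity
  have hsqrt : (Real.sqrt 2 * R) ^ q / (N : ℝ) ^ (q / 2) = (2 * R ^ 2 / N) ^ (q / 2) := by
    have hsq : 2 * R ^ 2 = (Real.sqrt 2 * R) ^ 2 := by rw [mul_pow, Real.sq_sqrt zero_le_two]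
    rw [Real.div_rpow (by positivity) (by positivity), hsq, ← Real.rpow_natCast,
      ← Real.rpow_mul (by positivity)]
    congr 2; ring
  refine (le_add_two_mul_rpow_mul_of_forall_pos (B := 2 * L * R ^ 2 / N) hq2 hc hδ
    fun ρ hρ => (h ρ hρ).trans_eq (by ring)).trans_eq ?_
  rw [← hsqrt]; ring

/-- Optimization over the auxiliary parameter `ρ` in the proof of Theorem 4.1. -/
theorem stmt_8 (L R δ q F : ℝ) (N : ℕ) (hL : 0 < L) (hR : 0 < R) (hδ : 0 ≤ δ)
    (hq0 : 0 ≤ q) (hq2 : q < 2) (hN : 0 < N)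
    (h : ∀ ρ > (0 : ℝ),
      F ≤ 2 * L * R ^ 2 / N + 2 * q * ρ * R ^ 2 / N +
        (2 - q) * δ ^ (2 / (2 - q)) * ρ ^ (-(q / (2 - q)))) :
    F ≤ 2 * L * R ^ 2 / N + 2 * (Real.sqrt 2 * R) ^ q * δ / (N : ℝ) ^ (q / 2) :=
  stmt_8_general L R δ q F N hR hδ hq2 hN h
end

section
/- Let L > 0, R > 0, δ ≥ 0, q ∈ [0,2), N a positive integer, and F a real number. If F ≤ 8LR²/(N+1)² + 8qρR²/(N+1)² + (2−q)·δ^{2/(2−q)}·ρ^{−q/(2−q)}·N holds for every ρ > 0, then F ≤ 8LR²/(N+1)² + 2(2√2·R)^q·δ/N^{(3q−2)/2}. -/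
/-!
With `a = 8R²/(N+1)²` and `b = δ N^((2-q)/2)` the hypothesis reads
`F ≤ A + q a ρ + (2-q) b^(2/(2-q)) ρ^(-q/(2-q))`. At `ρ = β / a^((2-q)/2)` the two `ρ`-terms
balance, both being at most `a^(q/2) β` once `b ≤ β`, so `F ≤ A + 2 a^(q/2) β`; letting `β ↓ b`
(which also covers `δ = 0`) gives `F ≤ A + 2 a^(q/2) b`. Finally
`a^(q/2) = (2√2 R/(N+1))^q ≤ (2√2 R/N)^q`.
-/

open Real

noncomputable def tradeOff (q a b ρ : ℝ) : ℝ :=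
  q * a * ρ + (2 - q) * b ^ (2 / (2 - q)) * ρ ^ (-(q / (2 - q)))

lemma tradeOff_le_of_le {a b β q : ℝ} (ha : 0 < a) (hb : 0 ≤ b) (hbβ : b ≤ β) (hβ : 0 < β)
    (hq2 : q < 2) :
    tradeOff q a b (β / a ^ ((2 - q) / 2)) ≤ 2 * a ^ (q / 2) * β := by
  have hs : 0 < 2 - q := by linarith
  have hlin : a * (β / a ^ ((2 - q) / 2)) = a ^ (q / 2) * β := by
    have ha_split : a ^ (q / 2) * a ^ ((2 - q) / 2) = a := by
      rw [← rpow_add ha]; ring_nf; exact rpow_one a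
    nth_rewrite 1 [← ha_split]
    field_simp
  have hdual :
      b ^ (2 / (2 - q)) * (β / a ^ ((2 - q) / 2)) ^ (-(q / (2 - q))) ≤ a ^ (q / 2) * β := by
    have ha_exp : (2 - q) / 2 * -(q / (2 - q)) = -(q / 2) := by field_simp
    have hβ_exp : 2 / (2 - q) + -(q / (2 - q)) = 1 := by field_simp; ring
    calc b ^ (2 / (2 - q)) * (β / a ^ ((2 - q) / 2)) ^ (-(q / (2 - q)))
        ≤ β ^ (2 / (2 - q)) * (β / a ^ ((2 - q) / 2)) ^ (-(q / (2 - q))) := by gcongr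
      _ = a ^ (q / 2) * β ^ (2 / (2 - q) + -(q / (2 - q))) := by
        rw [div_rpow hβ.le (by positivity), ← rpow_mul ha.le, ha_exp, rpow_neg ha.le,
          rpow_add hβ]
        field_simp
      _ = a ^ (q / 2) * β := by rw [hβ_exp, rpow_one]
  unfold tradeOff
  nlinarith

lemma le_add_of_forall_le_add_tradeOff {F A a b q : ℝ} (ha : 0 < a) (hb : 0 ≤ b) (hq2 : q < 2)
    (h : ∀ ρ > 0, F ≤ A + tradeOff q a b ρ) :
    F ≤ A + 2 * a ^ (q / 2) * b := by
  refine le_of_forall_pos_le_add fun ε hε => ?_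
  have hc : 0 < 2 * a ^ (q / 2) := by positivity
  set β := b + ε / (2 * a ^ (q / 2))
  have hbβ : b ≤ β := by simp only [β]; linarith [div_pos hε hc]
  have hβ : 0 < β := by positivity
  calc F ≤ A + tradeOff q a b (β / a ^ ((2 - q) / 2)) := h _ (by positivity)
    _ ≤ A + 2 * a ^ (q / 2) * β := by gcongr; exact tradeOff_le_of_le ha hb hbβ hβ hq2
    _ = A + 2 * a ^ (q / 2) * b + ε := by simp only [β]; field_simp; ring

lemma mul_rpow_div_two_rpow_two_div {x y s : ℝ} (hx : 0 ≤ x) (hy : 0 ≤ y) (hs : s ≠ 0) :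
    (x * y ^ (s / 2)) ^ (2 / s) = x ^ (2 / s) * y := by
  rw [mul_rpow hx (by positivity), ← rpow_mul hy, show s / 2 * (2 / s) = 1 by field_simp,
    rpow_one]

lemma sq_rpow_div_two {x : ℝ} (hx : 0 ≤ x) (q : ℝ) : (x ^ 2) ^ (q / 2) = x ^ q := by
  rw [← rpow_two, ← rpow_mul hx]; ring_nf

theorem stmt_10_general (L R δ q F : ℝ) (N : ℕ) (hR : 0 < R) (hδ : 0 ≤ δ)
    (hq0 : 0 ≤ q) (hq2 : q < 2) (hN : 0 < N)
    (h : ∀ ρ > (0 : ℝ),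
      F ≤ 8 * L * R ^ 2 / ((N : ℝ) + 1) ^ 2 + 8 * q * ρ * R ^ 2 / ((N : ℝ) + 1) ^ 2 +
        (2 - q) * δ ^ (2 / (2 - q)) * ρ ^ (-(q / (2 - q))) * N) :
    F ≤ 8 * L * R ^ 2 / ((N : ℝ) + 1) ^ 2 +
      2 * (2 * Real.sqrt 2 * R) ^ q * δ / (N : ℝ) ^ ((3 * q - 2) / 2) := by
  have hN' : (0 : ℝ) < N := by exact_mod_cast hN
  have hb_pow : (δ * (N : ℝ) ^ ((2 - q) / 2)) ^ (2 / (2 - q)) = δ ^ (2 / (2 - q)) * N :=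
    mul_rpow_div_two_rpow_two_div hδ hN'.le (by linarith)
  have key := le_add_of_forall_le_add_tradeOff (F := F) (A := 8 * L * R ^ 2 / ((N : ℝ) + 1) ^ 2)
    (a := 8 * R ^ 2 / ((N : ℝ) + 1) ^ 2) (b := δ * (N : ℝ) ^ ((2 - q) / 2)) (by positivity)
    (by positivity) hq2 fun ρ hρ => by
      rw [tradeOff, hb_pow, ← add_assoc]; convert h ρ hρ using 2 <;> ring
  have h8 : 8 * R ^ 2 / ((N : ℝ) + 1) ^ 2 = (2 * √2 * R / ((N : ℝ) + 1)) ^ 2 := by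
    rw [div_pow, mul_pow, mul_pow, sq_sqrt zero_le_two]; ring
  refine key.trans (add_le_add_right ?_ _)
  calc 2 * (8 * R ^ 2 / ((N : ℝ) + 1) ^ 2) ^ (q / 2) * (δ * (N : ℝ) ^ ((2 - q) / 2))
      = 2 * (2 * √2 * R / ((N : ℝ) + 1)) ^ q * δ * (N : ℝ) ^ ((2 - q) / 2) := by
        rw [h8, sq_rpow_div_two (by positivity)]; ring
    _ ≤ 2 * (2 * √2 * R / N) ^ q * δ * (N : ℝ) ^ ((2 - q) / 2) := by gcongr; linarith
    _ = 2 * (2 * √2 * R) ^ q * δ / (N : ℝ) ^ ((3 * q - 2) / 2) := by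
        rw [show (2 - q) / 2 = q - (3 * q - 2) / 2 by ring, rpow_sub hN',
          div_rpow (by positivity) hN'.le]
        field_simp

/-- Optimization over the auxiliary parameter `ρ` in the proof of Theorem 5.1. -/
theorem stmt_10 (L R δ q F : ℝ) (N : ℕ) (hL : 0 < L) (hR : 0 < R) (hδ : 0 ≤ δ)
    (hq0 : 0 ≤ q) (hq2 : q < 2) (hN : 0 < N)
    (h : ∀ ρ > (0 : ℝ),
      F ≤ 8 * L * R ^ 2 / ((N : ℝ) + 1) ^ 2 + 8 * q * ρ * R ^ 2 / ((N : ℝ) + 1) ^ 2 +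
        (2 - q) * δ ^ (2 / (2 - q)) * ρ ^ (-(q / (2 - q))) * N) :
    F ≤ 8 * L * R ^ 2 / ((N : ℝ) + 1) ^ 2 +
      2 * (2 * Real.sqrt 2 * R) ^ q * δ / (N : ℝ) ^ ((3 * q - 2) / 2) :=
  stmt_10_general L R δ q F N hR hδ hq0 hq2 hN h
end

section
/- Let Q ⊆ E = EuclideanSpace ℝ (Fin n) be a convex set, δ ≥ 0, q ∈ [0,2), 0 < μ ≤ L, and let F : E → ℝ, g : E → E satisfy (μ/2)‖x−y‖² ≤ f(x) − ( F(y) + ⟨g(y), x−y⟩ ) ≤ (L/2)‖x−y‖² + δ‖x−y‖^q for all x, y ∈ Q, for some f : E → ℝ. Let x*, y, y⁺ ∈ Q and suppose ⟨g(y) + L·(y⁺ − y), x − y⁺⟩ ≥ 0 for every x ∈ Q (the first-order optimality condition of the projected gradient step from y). Then ‖y⁺ − x*‖² ≤ (1 − μ/L)·‖y − x*‖² + (2/L)·( f(x*) − f(y⁺) ) + (2δ/L)·‖y⁺ − y‖^q. -/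
/-!
Subtracting the lower oracle bound at `(x*, y)` from the upper one at `(y⁺, y)` leaves the
linear term `⟪g y, y⁺ - x*⟫`, which the optimality condition of the step bounds by
`L ⟪y⁺ - y, x* - y⁺⟫`. The three-point identity
`2 ⟪y⁺ - y, x* - y⁺⟫ + ‖y⁺ - y‖² = ‖x* - y‖² - ‖x* - y⁺‖²` then turns the quadratic terms into
the difference of squared distances to `x*`, and dividing by `L` gives the contraction.
-/

open scoped RealInnerProductSpace

variable {E : Type*} [NormedAddCommGroup E] [InnerProductSpace ℝ E]

theorem two_mul_inner_add_norm_sq_eq_norm_sq_sub_norm_sq (a b c : E) :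
    2 * ⟪b - a, c - b⟫ + ‖b - a‖ ^ 2 = ‖c - a‖ ^ 2 - ‖c - b‖ ^ 2 := by
  have h := norm_add_sq_real (c - b) (b - a)
  rw [sub_add_sub_cancel, real_inner_comm] at h
  linarith

/-- A `(δ, L, μ, q)`-oracle `(F, g)` of `f` on `Q`. -/
def IsInexactOracle (Q : Set E) (δ L μ q : ℝ) (f F : E → ℝ) (g : E → E) : Prop :=
  ∀ x ∈ Q, ∀ y ∈ Q,
    μ / 2 * ‖x - y‖ ^ 2 ≤ f x - (F y + ⟪g y, x - y⟫) ∧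
    f x - (F y + ⟪g y, x - y⟫) ≤ L / 2 * ‖x - y‖ ^ 2 + δ * ‖x - y‖ ^ q

namespace IsInexactOracle

variable {Q : Set E} {δ L μ q : ℝ} {f F : E → ℝ} {g : E → E}

theorem sub_le (h : IsInexactOracle Q δ L μ q f F g) {x y z : E}
    (hx : x ∈ Q) (hy : y ∈ Q) (hz : z ∈ Q) :
    f z - f x ≤ ⟪g y, z - x⟫ + L / 2 * ‖z - y‖ ^ 2 - μ / 2 * ‖x - y‖ ^ 2 +
      δ * ‖z - y‖ ^ q := by
  have hlower := (h x hx y hy).1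
  have hupper := (h z hz y hy).2
  have hlin : ⟪g y, z - x⟫ = ⟪g y, z - y⟫ - ⟪g y, x - y⟫ := by
    rw [← inner_sub_right, sub_sub_sub_cancel_right]
  linarith

theorem mul_norm_sq_le_of_projGradStep (h : IsInexactOracle Q δ L μ q f F g) {x y yplus : E}
    (hx : x ∈ Q) (hy : y ∈ Q) (hyplus : yplus ∈ Q)
    (hopt : ∀ z ∈ Q, 0 ≤ ⟪g y + L • (yplus - y), z - yplus⟫) :
    L * ‖x - yplus‖ ^ 2 ≤ (L - μ) * ‖x - y‖ ^ 2 + 2 * (f x - f yplus) +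
      2 * δ * ‖yplus - y‖ ^ q := by
  have hgap := h.sub_le hx hy hyplus
  have hlin : ⟪g y, yplus - x⟫ ≤ L * ⟪yplus - y, x - yplus⟫ := by
    have hstep := hopt x hx
    rw [inner_add_left, real_inner_smul_left] at hstep
    have hflip : ⟪g y, x - yplus⟫ = -⟪g y, yplus - x⟫ := by rw [← inner_neg_right, neg_sub]
    linarith
  have hthree := two_mul_inner_add_norm_sq_eq_norm_sq_sub_norm_sq y yplus x
  linear_combination 2 * hgap + 2 * hlin + L * hthree

end IsInexactOracle

theorem stmt_13_general {n : ℕ} (Q : Set (EuclideanSpace ℝ (Fin n)))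
    (δ q μ L : ℝ) (hμ : 0 < μ) (hμL : μ ≤ L)
    (f F : EuclideanSpace ℝ (Fin n) → ℝ)
    (g : EuclideanSpace ℝ (Fin n) → EuclideanSpace ℝ (Fin n))
    (horacle : ∀ x ∈ Q, ∀ y ∈ Q,
      μ / 2 * ‖x - y‖ ^ 2 ≤ f x - (F y + ⟪g y, x - y⟫) ∧
      f x - (F y + ⟪g y, x - y⟫) ≤ L / 2 * ‖x - y‖ ^ 2 + δ * ‖x - y‖ ^ q)
    (xstar y yplus : EuclideanSpace ℝ (Fin n))
    (hxstar : xstar ∈ Q) (hy : y ∈ Q) (hyplus : yplus ∈ Q)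
    (hopt : ∀ x ∈ Q, 0 ≤ ⟪g y + L • (yplus - y), x - yplus⟫) :
    ‖yplus - xstar‖ ^ 2 ≤ (1 - μ / L) * ‖y - xstar‖ ^ 2 +
      2 / L * (f xstar - f yplus) + 2 * δ / L * ‖yplus - y‖ ^ q := by
  have hL : 0 < L := hμ.trans_le hμL
  have hkey := IsInexactOracle.mul_norm_sq_le_of_projGradStep horacle hxstar hy hyplus hopt
  rw [norm_sub_rev yplus, norm_sub_rev y, ← mul_le_mul_iff_of_pos_left hL]
  calc L * ‖xstar - yplus‖ ^ 2
      ≤ (L - μ) * ‖xstar - y‖ ^ 2 + 2 * (f xstar - f yplus) + 2 * δ * ‖yplus - y‖ ^ q := hkey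
    _ = L * ((1 - μ / L) * ‖xstar - y‖ ^ 2 + 2 / L * (f xstar - f yplus) +
          2 * δ / L * ‖yplus - y‖ ^ q) := by
        field_simp

/-- Per-iteration contraction inequality in the proof of Theorem 6.1, for the projected
gradient step `y⁺` from `y` with a `(δ, L, μ, q)`-oracle. -/
theorem stmt_13 {n : ℕ} (Q : Set (EuclideanSpace ℝ (Fin n)))
    (hQconv : Convex ℝ Q)
    (δ q μ L : ℝ) (hδ : 0 ≤ δ) (hq0 : 0 ≤ q) (hq2 : q < 2) (hμ : 0 < μ) (hμL : μ ≤ L)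
    (f F : EuclideanSpace ℝ (Fin n) → ℝ)
    (g : EuclideanSpace ℝ (Fin n) → EuclideanSpace ℝ (Fin n))
    (horacle : ∀ x ∈ Q, ∀ y ∈ Q,
      μ / 2 * ‖x - y‖ ^ 2 ≤ f x - (F y + ⟪g y, x - y⟫) ∧
      f x - (F y + ⟪g y, x - y⟫) ≤ L / 2 * ‖x - y‖ ^ 2 + δ * ‖x - y‖ ^ q)
    (xstar y yplus : EuclideanSpace ℝ (Fin n))
    (hxstar : xstar ∈ Q) (hy : y ∈ Q) (hyplus : yplus ∈ Q)
    (hopt : ∀ x ∈ Q, 0 ≤ ⟪g y + L • (yplus - y), x - yplus⟫) :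
    ‖yplus - xstar‖ ^ 2 ≤ (1 - μ / L) * ‖y - xstar‖ ^ 2 +
      2 / L * (f xstar - f yplus) + 2 * δ / L * ‖yplus - y‖ ^ q :=
  stmt_13_general Q δ q μ L hμ hμL f F g horacle xstar y yplus hxstar hy hyplus hopt
end

section
/- Let Q ⊆ E = EuclideanSpace ℝ (Fin n) be a convex set, δ ≥ 0, L > 0, μ > 0, q ∈ [0,2), f : E → ℝ, and let F : E → ℝ, g : E → E satisfy for all x, y ∈ Q: (μ/2)‖x−y‖² ≤ f(x) − ( F(y) + ⟨g(y), x−y⟩ ) ≤ (L/2)‖x−y‖² + δ‖x−y‖^q. Then for every ρ > 0 and all x, y ∈ Q: (μ/2)‖x−y‖² ≤ f(x) − ( F(y) + ⟨g(y), x−y⟩ ) ≤ ((L + qρ)/2)‖x−y‖² + ((2−q)/2)·δ^{2/(2−q)}·ρ^{−q/(2−q)}. That is, a (δ,L,μ,q)-oracle of degree q is a (δ̂, L̂, μ)-oracle in the Devolder–Glineur–Nesterov sense with L̂ = L + qρ and δ̂ = ((2−q)/2)·δ^{2/(2−q)}·ρ^{−q/(2−q)}. -/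
open scoped RealInnerProductSpace

/-- Weighted AM–GM with weights `q/p` and `(p-q)/p`, applied to `ρ r^p` and the constant term:
the powers of `ρ` cancel and the geometric mean is exactly `δ r^q`. -/
theorem mul_rpow_le_young {δ q p ρ r : ℝ} (hδ : 0 ≤ δ) (hq : 0 ≤ q) (hqp : q < p)
    (hρ : 0 < ρ) (hr : 0 ≤ r) :
    δ * r ^ q ≤ q / p * ρ * r ^ p + (p - q) / p * δ ^ (p / (p - q)) * ρ ^ (-(q / (p - q))) := by
  have hp : 0 < p := hq.trans_lt hqp
  have hpq : 0 < p - q := sub_pos.2 hqp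
  have amgm := Real.geom_mean_le_arith_mean2_weighted (w₁ := q / p) (w₂ := (p - q) / p)
    (p₁ := ρ * r ^ p) (p₂ := δ ^ (p / (p - q)) * ρ ^ (-(q / (p - q))))
    (by positivity) (by positivity) (by positivity) (by positivity) (by field_simp; ring)
  have geom_mean : (ρ * r ^ p) ^ (q / p) * (δ ^ (p / (p - q)) * ρ ^ (-(q / (p - q)))) ^ ((p - q) / p)
      = δ * r ^ q := by
    rw [Real.mul_rpow hρ.le (by positivity), Real.mul_rpow (by positivity) (by positivity),
      ← Real.rpow_mul hr, ← Real.rpow_mul hδ, ← Real.rpow_mul hρ.le,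
      show p * (q / p) = q by field_simp, show p / (p - q) * ((p - q) / p) = 1 by field_simp,
      show -(q / (p - q)) * ((p - q) / p) = -(q / p) by field_simp, Real.rpow_one,
      Real.rpow_neg hρ.le]
    have : ρ ^ (q / p) ≠ 0 := (Real.rpow_pos_of_pos hρ _).ne'
    field_simp
  rw [geom_mean] at amgm
  linarith

theorem stmt_14_general {n : ℕ} (Q : Set (EuclideanSpace ℝ (Fin n)))
    (δ L μ q : ℝ) (hδ : 0 ≤ δ) (hq0 : 0 ≤ q) (hq2 : q < 2)
    (f F : EuclideanSpace ℝ (Fin n) → ℝ)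
    (g : EuclideanSpace ℝ (Fin n) → EuclideanSpace ℝ (Fin n))
    (horacle : ∀ x ∈ Q, ∀ y ∈ Q,
      μ / 2 * ‖x - y‖ ^ 2 ≤ f x - (F y + ⟪g y, x - y⟫) ∧
      f x - (F y + ⟪g y, x - y⟫) ≤ L / 2 * ‖x - y‖ ^ 2 + δ * ‖x - y‖ ^ q) :
    ∀ ρ > (0 : ℝ), ∀ x ∈ Q, ∀ y ∈ Q,
      μ / 2 * ‖x - y‖ ^ 2 ≤ f x - (F y + ⟪g y, x - y⟫) ∧
      f x - (F y + ⟪g y, x - y⟫) ≤ (L + q * ρ) / 2 * ‖x - y‖ ^ 2 +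
        (2 - q) / 2 * δ ^ (2 / (2 - q)) * ρ ^ (-(q / (2 - q))) := by
  intro ρ hρ x hx y hy
  obtain ⟨lower, upper⟩ := horacle x hx y hy
  have young := mul_rpow_le_young hδ hq0 hq2 hρ (norm_nonneg (x - y))
  rw [Real.rpow_two] at young
  exact ⟨lower, by linarith⟩

/-- A `(δ, L, μ, q)`-oracle of degree `q` is, for every `ρ > 0`, a
Devolder–Glineur–Nesterov `(δ̂, L̂, μ)`-oracle with `L̂ = L + qρ` and
`δ̂ = ((2 - q)/2) * δ^(2/(2-q)) * ρ^(-q/(2-q))`. -/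
theorem stmt_14 {n : ℕ} (Q : Set (EuclideanSpace ℝ (Fin n)))
    (hQconv : Convex ℝ Q)
    (δ L μ q : ℝ) (hδ : 0 ≤ δ) (hL : 0 < L) (hμ : 0 < μ) (hq0 : 0 ≤ q) (hq2 : q < 2)
    (f F : EuclideanSpace ℝ (Fin n) → ℝ)
    (g : EuclideanSpace ℝ (Fin n) → EuclideanSpace ℝ (Fin n))
    (horacle : ∀ x ∈ Q, ∀ y ∈ Q,
      μ / 2 * ‖x - y‖ ^ 2 ≤ f x - (F y + ⟪g y, x - y⟫) ∧
      f x - (F y + ⟪g y, x - y⟫) ≤ L / 2 * ‖x - y‖ ^ 2 + δ * ‖x - y‖ ^ q) :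
    ∀ ρ > (0 : ℝ), ∀ x ∈ Q, ∀ y ∈ Q,
      μ / 2 * ‖x - y‖ ^ 2 ≤ f x - (F y + ⟪g y, x - y⟫) ∧
      f x - (F y + ⟪g y, x - y⟫) ≤ (L + q * ρ) / 2 * ‖x - y‖ ^ 2 +
        (2 - q) / 2 * δ ^ (2 / (2 - q)) * ρ ^ (-(q / (2 - q))) :=
  stmt_14_general Q δ L μ q hδ hq0 hq2 f F g horacle
end

section
/- Let Q ⊆ E = EuclideanSpace ℝ (Fin n) be a convex set, δ ≥ 0, L > 0, q ∈ [0,2), and let ψm : E × E → ℝ satisfy, for all x, y, z ∈ Q: ψm(x,y) ≤ ψm(x,z) + ψm(z,y) + (L/2)(‖z−x‖² + ‖z−y‖²) + (δ/2)(‖z−x‖^q + ‖z−y‖^q). Then for every ρ > 0 and all x, y, z ∈ Q: ψm(x,y) ≤ ψm(x,z) + ψm(z,y) + ((L + qρ)/2)(‖z−x‖² + ‖z−y‖²) + ((2−q)/2)·δ^{2/(2−q)}·ρ^{−q/(2−q)}. -/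
/-!
Both `‖z - x‖ ^ q` and `‖z - y‖ ^ q` are at most `u ^ (q/2)` with `u = ‖z - x‖² + ‖z - y‖²`,
and weighted AM-GM with weights `q/2` and `1 - q/2` trades `δ u ^ (q/2)` for `(qρ/2) u` plus a
constant, the `δ̂` of the statement.
-/

open Real

lemma rpow_le_sq_add_sq_rpow_half {a b q : ℝ} (ha : 0 ≤ a) (hq : 0 ≤ q) :
    a ^ q ≤ (a ^ 2 + b ^ 2) ^ (q / 2) := by
  rw [rpow_div_two_eq_sqrt q (by positivity)]
  exact rpow_le_rpow ha (le_sqrt_of_sq_le (by nlinarith)) hq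

/-- Weighted AM-GM with weights `θ` and `1 - θ`, after splitting `δ u^θ` as
`(ρ u)^θ · (δ^(1/(1-θ)) ρ^(-θ/(1-θ)))^(1-θ)`. -/
lemma mul_rpow_le_young_s19 {δ θ ρ u : ℝ} (hδ : 0 ≤ δ) (hθ0 : 0 ≤ θ) (hθ1 : θ < 1)
    (hρ : 0 < ρ) (hu : 0 ≤ u) :
    δ * u ^ θ ≤ θ * ρ * u + (1 - θ) * δ ^ (1 / (1 - θ)) * ρ ^ (-(θ / (1 - θ))) := by
  have hθ' : 1 - θ ≠ 0 := by linarith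
  have hsplit : (ρ * u) ^ θ * (δ ^ (1 / (1 - θ)) * ρ ^ (-(θ / (1 - θ)))) ^ (1 - θ) =
      δ * u ^ θ := by
    rw [mul_rpow (rpow_nonneg hδ _) (rpow_nonneg hρ.le _), ← rpow_mul hδ, ← rpow_mul hρ.le,
      one_div_mul_cancel hθ', rpow_one, neg_mul, div_mul_cancel₀ _ hθ', mul_rpow hρ.le hu,
      rpow_neg hρ.le]
    field_simp [(rpow_pos_of_pos hρ θ).ne']
  have := geom_mean_le_arith_mean2_weighted hθ0 (by linarith : 0 ≤ 1 - θ)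
    (by positivity : 0 ≤ ρ * u)
    (by positivity : 0 ≤ δ ^ (1 / (1 - θ)) * ρ ^ (-(θ / (1 - θ)))) (by ring)
  rw [hsplit] at this
  linarith

lemma half_mul_rpow_add_rpow_le {δ q ρ a b : ℝ} (hδ : 0 ≤ δ) (hq0 : 0 ≤ q) (hq2 : q < 2)
    (hρ : 0 < ρ) (ha : 0 ≤ a) (hb : 0 ≤ b) :
    δ / 2 * (a ^ q + b ^ q) ≤
      q * ρ / 2 * (a ^ 2 + b ^ 2) + (2 - q) / 2 * δ ^ (2 / (2 - q)) * ρ ^ (-(q / (2 - q))) := by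
  have ha' : a ^ q ≤ (a ^ 2 + b ^ 2) ^ (q / 2) := rpow_le_sq_add_sq_rpow_half ha hq0
  have hb' : b ^ q ≤ (a ^ 2 + b ^ 2) ^ (q / 2) := by
    rw [add_comm]; exact rpow_le_sq_add_sq_rpow_half hb hq0
  have hyoung := mul_rpow_le_young_s19 hδ (by linarith : 0 ≤ q / 2) (by linarith : q / 2 < 1) hρ
    (by positivity : 0 ≤ a ^ 2 + b ^ 2)
  have h2q : (2 : ℝ) - q ≠ 0 := by linarith
  have he1 : 1 / (1 - q / 2) = 2 / (2 - q) := by field_simp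
  have he2 : q / 2 / (1 - q / 2) = q / (2 - q) := by field_simp
  rw [he1, he2] at hyoung
  calc δ / 2 * (a ^ q + b ^ q) ≤ δ * (a ^ 2 + b ^ 2) ^ (q / 2) := by nlinarith
    _ ≤ _ := hyoung
    _ = _ := by ring

theorem stmt_19_general {n : ℕ} (Q : Set (EuclideanSpace ℝ (Fin n)))
    (δ L q : ℝ) (hδ : 0 ≤ δ) (hq0 : 0 ≤ q) (hq2 : q < 2)
    (ψm : EuclideanSpace ℝ (Fin n) → EuclideanSpace ℝ (Fin n) → ℝ)
    (hm5 : ∀ x ∈ Q, ∀ y ∈ Q, ∀ z ∈ Q,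
      ψm x y ≤ ψm x z + ψm z y + L / 2 * (‖z - x‖ ^ 2 + ‖z - y‖ ^ 2) +
        δ / 2 * (‖z - x‖ ^ q + ‖z - y‖ ^ q)) :
    ∀ ρ > (0 : ℝ), ∀ x ∈ Q, ∀ y ∈ Q, ∀ z ∈ Q,
      ψm x y ≤ ψm x z + ψm z y + (L + q * ρ) / 2 * (‖z - x‖ ^ 2 + ‖z - y‖ ^ 2) +
        (2 - q) / 2 * δ ^ (2 / (2 - q)) * ρ ^ (-(q / (2 - q))) := by
  intro ρ hρ x hx y hy z hz
  have := half_mul_rpow_add_rpow_le hδ hq0 hq2 hρ (norm_nonneg (z - x)) (norm_nonneg (z - y))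
  linarith [hm5 x hx y hy z hz]

/-- Condition (v) of a `(δ, L, q)`-model of degree `q` for variational inequalities
yields, for every `ρ > 0`, the smoothness-type condition of a `(δ̂, L̂)`-model with
`L̂ = L + qρ` and `δ̂ = ((2 - q)/2) δ^(2/(2-q)) ρ^(-q/(2-q))`. -/
theorem stmt_19 {n : ℕ} (Q : Set (EuclideanSpace ℝ (Fin n)))
    (hQconv : Convex ℝ Q)
    (δ L q : ℝ) (hδ : 0 ≤ δ) (hL : 0 < L) (hq0 : 0 ≤ q) (hq2 : q < 2)
    (ψm : EuclideanSpace ℝ (Fin n) → EuclideanSpace ℝ (Fin n) → ℝ)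
    (hm5 : ∀ x ∈ Q, ∀ y ∈ Q, ∀ z ∈ Q,
      ψm x y ≤ ψm x z + ψm z y + L / 2 * (‖z - x‖ ^ 2 + ‖z - y‖ ^ 2) +
        δ / 2 * (‖z - x‖ ^ q + ‖z - y‖ ^ q)) :
    ∀ ρ > (0 : ℝ), ∀ x ∈ Q, ∀ y ∈ Q, ∀ z ∈ Q,
      ψm x y ≤ ψm x z + ψm z y + (L + q * ρ) / 2 * (‖z - x‖ ^ 2 + ‖z - y‖ ^ 2) +
        (2 - q) / 2 * δ ^ (2 / (2 - q)) * ρ ^ (-(q / (2 - q))) :=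
  stmt_19_general Q δ L q hδ hq0 hq2 ψm hm5
end
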